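/- For every z > 0, ∫_{−1}^{0} ∫_{−ξ z}^{∞} σ^{−4} (1 + ξ z/σ)^{−(1+1/ξ)} dσ dξ = 2 z^{−3} ln(3/2). -/

import Mathlib

/-!
For fixed `ξ < 0` put `a = -ξ z` and `p = -(1 + 1/ξ) > -1`. The substitution `σ = a / (1 - u)`
turns the inner integral into `a⁻³ ∫₀¹ (1 - u)² uᵖ du = 2 / (a³ (p + 1)(p + 2)(p + 3))`,
which simplifies to `2 z⁻³ / ((1 - ξ)(1 - 2ξ))`. The outer integrand then has the antiderivative
`log (1 - ξ) - log (1 - 2ξ)`, whose increment over `[-1, 0]` is `log (3/2)`.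
-/

open MeasureTheory Real Set
open scoped ENNReal

theorem lintegral_Ioo_ofReal_eq_ofReal_intervalIntegral {f : ℝ → ℝ} {a b : ℝ} (hab : a ≤ b)
    (hf : IntervalIntegrable f volume a b) (hf_nonneg : ∀ x ∈ Ioo a b, 0 ≤ f x) :
    ∫⁻ x in Ioo a b, ENNReal.ofReal (f x) = ENNReal.ofReal (∫ x in a..b, f x) := by
  rw [intervalIntegral.integral_of_le hab, integral_Ioc_eq_integral_Ioo,
    ofReal_integral_eq_lintegral_ofReal
      (((intervalIntegrable_iff_integrableOn_Ioc_of_le hab).1 hf).mono_set Ioo_subset_Ioc_self)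
      ((ae_restrict_iff' measurableSet_Ioo).2 (.of_forall hf_nonneg))]

theorem integral_one_sub_sq_mul_rpow {p : ℝ} (hp : -1 < p) :
    ∫ u in (0 : ℝ)..1, (1 - u) ^ 2 * u ^ p = 2 / ((p + 1) * (p + 2) * (p + 3)) := by
  have hexpand : ∀ u ∈ uIcc (0 : ℝ) 1,
      (1 - u) ^ 2 * u ^ p = u ^ p - 2 * u ^ (p + 1) + u ^ (p + 2) := by
    intro u hu
    have hu0 : 0 ≤ u := (uIcc_of_le (zero_le_one' ℝ) ▸ hu).1
    rw [rpow_add' hu0 (by linarith), rpow_add' hu0 (by linarith), rpow_one, rpow_two]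
    ring
  have hint (q : ℝ) (hq : -1 < q) : IntervalIntegrable (fun u : ℝ => u ^ q) volume 0 1 :=
    intervalIntegral.intervalIntegrable_rpow' hq
  have hp1 := hint (p + 1) (by linarith)
  rw [intervalIntegral.integral_congr hexpand,
    intervalIntegral.integral_add ((hint p hp).sub (hp1.const_mul 2)) (hint (p + 2) (by linarith)),
    intervalIntegral.integral_sub (hint p hp) (hp1.const_mul 2),
    intervalIntegral.integral_const_mul, integral_rpow (.inl hp),
    integral_rpow (.inl (by linarith)), integral_rpow (.inl (by linarith))]
  simp only [one_rpow, zero_rpow (by linarith : p + 1 ≠ 0), zero_rpow (by linarith : p + 1 + 1 ≠ 0),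
    zero_rpow (by linarith : p + 2 + 1 ≠ 0)]
  rw [show p + 1 + 1 = p + 2 by ring, show p + 2 + 1 = p + 3 by ring]
  have : p + 1 ≠ 0 := by linarith
  have : p + 2 ≠ 0 := by linarith
  have : p + 3 ≠ 0 := by linarith
  field_simp
  ring

theorem image_div_one_sub_Ioo {a : ℝ} (ha : 0 < a) :
    (fun u => a / (1 - u)) '' Ioo 0 1 = Ioi a := by
  ext σ
  constructor
  · rintro ⟨u, ⟨hu0, hu1⟩, rfl⟩
    rw [mem_Ioi, lt_div_iff₀ (by linarith)]
    nlinarith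
  · intro hσ
    have hσ0 : 0 < σ := ha.trans hσ
    refine ⟨1 - a / σ, ⟨sub_pos.2 ((div_lt_one hσ0).2 hσ), sub_lt_self _ (by positivity)⟩, ?_⟩
    simp only [sub_sub_cancel, div_div_cancel₀ ha.ne']

theorem injOn_div_one_sub_Ioo {a : ℝ} (ha : 0 < a) :
    InjOn (fun u => a / (1 - u)) (Ioo 0 1) := by
  intro u hu v hv huv
  rw [div_eq_div_iff (by linarith [hu.2]) (by linarith [hv.2])] at huv
  nlinarith

theorem hasDerivAt_div_one_sub (a : ℝ) {u : ℝ} (hu : u ≠ 1) :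
    HasDerivAt (fun u => a / (1 - u)) (a / (1 - u) ^ 2) u :=
  ((hasDerivAt_const u a).div ((hasDerivAt_id' u).const_sub 1) (sub_ne_zero.2 hu.symm)).congr_deriv
    (by ring)

theorem lintegral_Ioi_inv_pow_four_mul_one_sub_div_rpow {a p : ℝ} (ha : 0 < a) (hp : -1 < p) :
    ∫⁻ σ in Ioi a, ENNReal.ofReal ((σ ^ 4)⁻¹ * (1 - a / σ) ^ p)
      = ENNReal.ofReal (2 / (a ^ 3 * ((p + 1) * (p + 2) * (p + 3)))) := by
  have hint : IntervalIntegrable (fun u : ℝ => (a ^ 3)⁻¹ * ((1 - u) ^ 2 * u ^ p)) volume 0 1 :=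
    ((intervalIntegral.intervalIntegrable_rpow' hp).continuousOn_mul
      (g := fun u : ℝ => (1 - u) ^ 2) (by fun_prop)).const_mul (a ^ 3)⁻¹
  calc ∫⁻ σ in Ioi a, ENNReal.ofReal ((σ ^ 4)⁻¹ * (1 - a / σ) ^ p)
      = ∫⁻ u in Ioo 0 1, ENNReal.ofReal |a / (1 - u) ^ 2|
          * ENNReal.ofReal (((a / (1 - u)) ^ 4)⁻¹ * (1 - a / (a / (1 - u))) ^ p) := by
        rw [← image_div_one_sub_Ioo ha, lintegral_image_eq_lintegral_abs_deriv_mul measurableSet_Ioo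
          (fun u hu => (hasDerivAt_div_one_sub a hu.2.ne).hasDerivWithinAt)
          (injOn_div_one_sub_Ioo ha)]
    _ = ∫⁻ u in Ioo 0 1, ENNReal.ofReal ((a ^ 3)⁻¹ * ((1 - u) ^ 2 * u ^ p)) := by
        refine setLIntegral_congr_fun measurableSet_Ioo fun u hu => ?_
        have hu1 : 1 - u ≠ 0 := by linarith [hu.2]
        rw [← ENNReal.ofReal_mul (abs_nonneg _), abs_of_nonneg (by positivity),
          show 1 - a / (a / (1 - u)) = u by field_simp; ring]
        field_simp
    _ = ENNReal.ofReal (2 / (a ^ 3 * ((p + 1) * (p + 2) * (p + 3)))) := by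
        rw [lintegral_Ioo_ofReal_eq_ofReal_intervalIntegral zero_le_one hint
            fun u hu => by have := hu.1; positivity,
          intervalIntegral.integral_const_mul, integral_one_sub_sq_mul_rpow hp, inv_mul_eq_div,
          div_div, mul_comm]

theorem lintegral_Ioi_rpow_neg_four_mul_one_add_div_rpow {ξ z : ℝ} (hz : 0 < z) (hξ : ξ < 0) :
    ∫⁻ σ in Ioi (-ξ * z), ENNReal.ofReal (σ ^ (-(4 : ℝ)) * (1 + ξ * z / σ) ^ (-(1 + 1 / ξ)))
      = ENNReal.ofReal (2 / z ^ 3 * ((1 - ξ) * (1 - 2 * ξ))⁻¹) := by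
  have ha : 0 < -ξ * z := mul_pos (neg_pos.2 hξ) hz
  have hp : -1 < -(1 + 1 / ξ) := by
    have : 1 / ξ < 0 := one_div_neg.2 hξ
    linarith
  have hintegrand : ∀ σ ∈ Ioi (-ξ * z), σ ^ (-(4 : ℝ)) * (1 + ξ * z / σ) ^ (-(1 + 1 / ξ))
      = (σ ^ 4)⁻¹ * (1 - -ξ * z / σ) ^ (-(1 + 1 / ξ)) := fun σ hσ => by
    rw [rpow_neg (ha.trans hσ).le, rpow_ofNat]
    ring_nf
  have hξ0 : ξ ≠ 0 := hξ.ne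
  have hprod : (-(1 + 1 / ξ) + 1) * (-(1 + 1 / ξ) + 2) * (-(1 + 1 / ξ) + 3)
      = -((1 - ξ) * (1 - 2 * ξ)) / ξ ^ 3 := by
    field_simp
    ring
  have : 1 - ξ ≠ 0 := by linarith
  have : 1 - 2 * ξ ≠ 0 := by linarith
  rw [setLIntegral_congr_fun measurableSet_Ioi fun σ hσ => congrArg ENNReal.ofReal (hintegrand σ hσ),
    lintegral_Ioi_inv_pow_four_mul_one_sub_div_rpow ha hp, hprod]
  congr 1
  field_simp

theorem one_sub_mul_one_sub_two_mul_pos {ξ : ℝ} (hξ : ξ < 1 / 2) : 0 < (1 - ξ) * (1 - 2 * ξ) :=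
  mul_pos (by linarith) (by linarith)

theorem hasDerivAt_log_one_sub_sub_log_one_sub_two_mul {ξ : ℝ} (hξ : ξ < 1 / 2) :
    HasDerivAt (fun ξ => log (1 - ξ) - log (1 - 2 * ξ)) ((1 - ξ) * (1 - 2 * ξ))⁻¹ ξ := by
  have h1 : 1 - ξ ≠ 0 := by linarith
  have h2 : 1 - 2 * ξ ≠ 0 := by linarith
  refine ((((hasDerivAt_id' ξ).const_sub 1).log h1).sub
    ((((hasDerivAt_id' ξ).const_mul 2).const_sub 1).log h2)).congr_deriv ?_
  rw [div_sub_div _ _ h1 h2, inv_eq_one_div]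
  congr 1
  ring

theorem continuousOn_inv_one_sub_mul_one_sub_two_mul :
    ContinuousOn (fun ξ : ℝ => ((1 - ξ) * (1 - 2 * ξ))⁻¹) (uIcc (-1) 0) :=
  ContinuousOn.inv₀ (by fun_prop) fun ξ hξ =>
    (one_sub_mul_one_sub_two_mul_pos
      (by linarith [(uIcc_of_le (by norm_num : (-1 : ℝ) ≤ 0) ▸ hξ).2])).ne'

theorem integral_inv_one_sub_mul_one_sub_two_mul :
    ∫ ξ in (-1 : ℝ)..0, ((1 - ξ) * (1 - 2 * ξ))⁻¹ = log (3 / 2) := by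
  rw [intervalIntegral.integral_eq_sub_of_hasDerivAt
    (fun ξ hξ => hasDerivAt_log_one_sub_sub_log_one_sub_two_mul ?_)
    continuousOn_inv_one_sub_mul_one_sub_two_mul.intervalIntegrable]
  · norm_num [log_div]
  · linarith [(uIcc_of_le (by norm_num : (-1 : ℝ) ≤ 0) ▸ hξ).2]

theorem gp_I2_integral (z : ℝ) (hz : 0 < z) :
    ∫⁻ ξ in Set.Ioo (-1 : ℝ) 0,
        ∫⁻ σ in Set.Ioi (-ξ * z),
          ENNReal.ofReal (σ ^ (-(4 : ℝ)) * (1 + ξ * z / σ) ^ (-(1 + 1 / ξ)))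
      = ENNReal.ofReal (2 * z ^ (-(3 : ℝ)) * Real.log (3 / 2)) := by
  rw [setLIntegral_congr_fun measurableSet_Ioo fun ξ hξ =>
      lintegral_Ioi_rpow_neg_four_mul_one_add_div_rpow hz hξ.2,
    lintegral_Ioo_ofReal_eq_ofReal_intervalIntegral (by norm_num)
      (continuousOn_inv_one_sub_mul_one_sub_two_mul.intervalIntegrable.const_mul (2 / z ^ 3))
      fun ξ hξ => mul_nonneg (by positivity)
        (inv_nonneg.2 (one_sub_mul_one_sub_two_mul_pos (by linarith [hξ.2])).le),
    intervalIntegral.integral_const_mul, integral_inv_one_sub_mul_one_sub_two_mul,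
    rpow_neg hz.le, rpow_ofNat, div_eq_mul_inv]
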